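/- If a pair of schema elements (e1, e2) of a schema S is connected by a path p over S, then there exist elements e1' and e2' in the double normalization DNorm(S) with F_S(e1')=e1 and F_S(e2')=e2 such that (e1',e2') is connected by p over DNorm(S). -/
import Mathlib


/-! ### Conflict-free regular expressions over unordered words -/

inductive RE (σ : Type) : Type
  | eps : RE σ
  | sym : σ → RE σ
  | union : RE σ → RE σ → RE σ
  | conc : RE σ → RE σ → RE σ
  | star : σ → RE σ
  | plus : σ → RE σ
  deriving DecidableEq

def uconc {σ : Type} (L₁ L₂ : Set (Multiset σ)) : Set (Multiset σ) :=
  {w | ∃ w₁ ∈ L₁, ∃ w₂ ∈ L₂, w = w₁ + w₂}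

def resem {σ : Type} : RE σ → Set (Multiset σ)
  | .eps => {0}
  | .sym a => {{a}}
  | .union t₁ t₂ => resem t₁ ∪ resem t₂
  | .conc t₁ t₂ => uconc (resem t₁) (resem t₂)
  | .star a => {w | ∃ n : ℕ, w = Multiset.replicate n a}
  | .plus a => {w | ∃ n : ℕ, 1 ≤ n ∧ w = Multiset.replicate n a}

def syms {σ : Type} [DecidableEq σ] : RE σ → Finset σ
  | .eps => ∅
  | .sym a => {a}
  | .union t₁ t₂ => syms t₁ ∪ syms t₂
  | .conc t₁ t₂ => syms t₁ ∪ syms t₂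
  | .star a => {a}
  | .plus a => {a}

def CF {σ : Type} [DecidableEq σ] : RE σ → Prop
  | .union t₁ t₂ => CF t₁ ∧ CF t₂ ∧ Disjoint (syms t₁) (syms t₂)
  | .conc t₁ t₂ => CF t₁ ∧ CF t₂ ∧ Disjoint (syms t₁) (syms t₂)
  | _ => True

def distr {σ : Type} : RE σ → RE σ → RE σ
  | .union A B, C => .union (distr A C) (distr B C)
  | A, .union B C => .union (distr A B) (distr A C)
  | A, B => .conc A B

def norm {σ : Type} : RE σ → RE σ
  | .eps => .eps
  | .sym a => .sym a
  | .union t₁ t₂ => .union (norm t₁) (norm t₂)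
  | .conc t₁ t₂ => distr (norm t₁) (norm t₂)
  | .star a => .star a
  | .plus a => .plus a

/-- The list of union-free clauses of a (normalized) expression. -/
def clauses {σ : Type} : RE σ → List (RE σ)
  | .union t₁ t₂ => clauses t₁ ++ clauses t₂
  | t => [t]

/-- An occurrence of symbol `a` that is *not* under a Kleene star. -/
def occursUnstarred {σ : Type} (a : σ) : RE σ → Prop
  | .eps => False
  | .sym b => b = a
  | .union t₁ t₂ => occursUnstarred a t₁ ∨ occursUnstarred a t₂
  | .conc t₁ t₂ => occursUnstarred a t₁ ∨ occursUnstarred a t₂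
  | .star _ => False
  | .plus b => b = a

/-! ### Graph schemas -/

/-- A schema element: regular expressions for incoming and outgoing edges. -/
abbrev Elem (σ : Type) := RE σ × RE σ

/-- Double normalization: each element is split into one element per pair of
union-free clauses of the DNFs of its `in` and `out` expressions. -/
def DNorm {σ : Type} [DecidableEq σ] (S : Finset (Elem σ)) : Finset (Elem σ) :=
  S.biUnion (fun e => ((clauses (norm e.1)).product (clauses (norm e.2))).toFinset)

/-- Conditions 1–3 of the definition of graph schemas: symbol closure between
incoming and outgoing expressions, and pairwise disjoint typings. -/
def IsSchema {σ : Type} [DecidableEq σ] (S : Finset (Elem σ)) : Prop :=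
  (∀ e ∈ S, CF e.1 ∧ CF e.2) ∧
  (∀ e ∈ S, ∀ a ∈ syms e.1, ∃ e' ∈ S, a ∈ syms e'.2) ∧
  (∀ e ∈ S, ∀ a ∈ syms e.2, ∃ e' ∈ S, a ∈ syms e'.1) ∧
  (∀ e ∈ S, ∀ e' ∈ S, e ≠ e' →
    resem e.1 ∩ resem e'.1 = ∅ ∨ resem e.2 ∩ resem e'.2 = ∅)

/-- Well-formedness: whenever a symbol occurs in the `out` (resp. `in`)
expressions of two distinct elements of `DNorm S`, every occurrence of it in an
`in` (resp. `out`) expression of `DNorm S` is under a star. -/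
def WellFormed {σ : Type} [DecidableEq σ] (S : Finset (Elem σ)) : Prop :=
  (∀ a : σ, (∃ e₁ ∈ DNorm S, ∃ e₂ ∈ DNorm S, e₁ ≠ e₂ ∧
      a ∈ syms e₁.2 ∧ a ∈ syms e₂.2) →
    ∀ e ∈ DNorm S, ¬ occursUnstarred a e.1) ∧
  (∀ a : σ, (∃ e₁ ∈ DNorm S, ∃ e₂ ∈ DNorm S, e₁ ≠ e₂ ∧
      a ∈ syms e₁.1 ∧ a ∈ syms e₂.1) →
    ∀ e ∈ DNorm S, ¬ occursUnstarred a e.2)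

/-! ### Data graphs and conformance -/

def inLabels {V σ : Type} [DecidableEq V] (E : Finset (V × σ × V)) (v : V) :
    Multiset σ :=
  ((E.filter (fun t => t.2.2 = v)).val.map (fun t => t.2.1))

def outLabels {V σ : Type} [DecidableEq V] (E : Finset (V × σ × V)) (v : V) :
    Multiset σ :=
  ((E.filter (fun t => t.1 = v)).val.map (fun t => t.2.1))

/-- A node has type `e` if its incoming/outgoing label multisets belong to the
languages of `e`. -/
def HasType {V σ : Type} [DecidableEq V] (E : Finset (V × σ × V)) (v : V)
    (e : Elem σ) : Prop :=
  inLabels E v ∈ resem e.1 ∧ outLabels E v ∈ resem e.2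

/-- A graph conforms to a schema if every node is typed by some element. -/
def Conforms {V σ : Type} [DecidableEq V] (E : Finset (V × σ × V))
    (S : Finset (Elem σ)) : Prop :=
  ∀ v : V, ∃ e ∈ S, HasType E v e

/-! ### RPQs, NREs, and their semantics -/

inductive RPQ (σ : Type) : Type
  | eps : RPQ σ
  | sym : σ → RPQ σ
  | union : RPQ σ → RPQ σ → RPQ σ
  | conc : RPQ σ → RPQ σ → RPQ σ
  | star : RPQ σ → RPQ σ

inductive NRE (σ : Type) : Type
  | eps : NRE σ
  | sym : σ → NRE σ
  | back : σ → NRE σ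
  | union : NRE σ → NRE σ → NRE σ
  | conc : NRE σ → NRE σ → NRE σ
  | star : NRE σ → NRE σ
  | test : NRE σ → NRE σ

/-- Composition of binary relations given as sets of pairs. -/
def relComp {α : Type} (R₁ R₂ : Set (α × α)) : Set (α × α) :=
  {p | ∃ m, (p.1, m) ∈ R₁ ∧ (m, p.2) ∈ R₂}

/-- `n`-fold composition, with the full identity relation as base. -/
def powRel {α : Type} (R : Set (α × α)) : ℕ → Set (α × α)
  | 0 => {p | p.1 = p.2}
  | n + 1 => relComp (powRel R n) R

/-- Semantics of RPQs on a graph with edge set `E`. -/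
def rpqSem {V σ : Type} (E : Set (V × σ × V)) : RPQ σ → Set (V × V)
  | .eps => {p | p.1 = p.2}
  | .sym a => {p | (p.1, a, p.2) ∈ E}
  | .union r₁ r₂ => rpqSem E r₁ ∪ rpqSem E r₂
  | .conc r₁ r₂ => relComp (rpqSem E r₁) (rpqSem E r₂)
  | .star r => ⋃ i : ℕ, powRel (rpqSem E r) i

/-- Semantics of NREs on a graph with edge set `E`. -/
def nreSem {V σ : Type} (E : Set (V × σ × V)) : NRE σ → Set (V × V)
  | .eps => {p | p.1 = p.2}
  | .sym a => {p | (p.1, a, p.2) ∈ E}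
  | .back a => {p | (p.2, a, p.1) ∈ E}
  | .union n₁ n₂ => nreSem E n₁ ∪ nreSem E n₂
  | .conc n₁ n₂ => relComp (nreSem E n₁) (nreSem E n₂)
  | .star n => ⋃ i : ℕ, powRel (nreSem E n) i
  | .test n => {p | p.1 = p.2 ∧ ∃ v, (p.1, v) ∈ nreSem E n}

/-! ### Type inference -/

/-- The identity relation on the elements of a schema. -/
def relId {σ : Type} (S : Finset (Elem σ)) : Set (Elem σ × Elem σ) :=
  {p | p.1 ∈ S ∧ p.1 = p.2}

/-- `n`-fold composition with the identity on `S` as base. -/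
def spowRel {σ : Type} (S : Finset (Elem σ)) (R : Set (Elem σ × Elem σ)) :
    ℕ → Set (Elem σ × Elem σ)
  | 0 => relId S
  | n + 1 => relComp (spowRel S R n) R

/-- Type inference for RPQs. -/
def rpqInf {σ : Type} [DecidableEq σ] (S : Finset (Elem σ)) :
    RPQ σ → Set (Elem σ × Elem σ)
  | .eps => relId S
  | .sym a => {p | p.1 ∈ S ∧ p.2 ∈ S ∧ a ∈ syms p.1.2 ∧ a ∈ syms p.2.1}
  | .union r₁ r₂ => rpqInf S r₁ ∪ rpqInf S r₂
  | .conc r₁ r₂ => relComp (rpqInf S r₁) (rpqInf S r₂)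
  | .star r => ⋃ i : ℕ, spowRel S (rpqInf S r) i

/-- `first` of a set of element pairs. -/
def firstOf {σ : Type} (R : Set (Elem σ × Elem σ)) : Set (Elem σ) :=
  {e | ∃ e', (e, e') ∈ R}

/-- Type inference for NREs. -/
def nreInf {σ : Type} [DecidableEq σ] (S : Finset (Elem σ)) :
    NRE σ → Set (Elem σ × Elem σ)
  | .eps => relId S
  | .sym a => {p | p.1 ∈ S ∧ p.2 ∈ S ∧ a ∈ syms p.1.2 ∧ a ∈ syms p.2.1}
  | .back a => {p | p.1 ∈ S ∧ p.2 ∈ S ∧ a ∈ syms p.1.1 ∧ a ∈ syms p.2.2}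
  | .union n₁ n₂ => nreInf S n₁ ∪ nreInf S n₂
  | .conc n₁ n₂ => relComp (nreInf S n₁) (nreInf S n₂)
  | .star n => ⋃ i : ℕ, spowRel S (nreInf S n) i
  | .test n => {p | p.1 ∈ firstOf (nreInf S n) ∧ p.2 ∈ firstOf (nreInf S n)}

/-! ### Paths -/

/-- `GConnects E p u v`: path `p` (a word over `σ`) connects node `u` to `v`. -/
inductive GConnects {V σ : Type} (E : Set (V × σ × V)) : List σ → V → V → Prop
  | nil (u : V) : GConnects E [] u u
  | cons {u u' v : V} {a : σ} {p : List σ} :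
      (u, a, u') ∈ E → GConnects E p u' v → GConnects E (a :: p) u v

/-- The language of paths that can match an RPQ. -/
def pathsOf {σ : Type} : RPQ σ → Set (List σ)
  | .eps => {[]}
  | .sym a => {[a]}
  | .union q₁ q₂ => pathsOf q₁ ∪ pathsOf q₂
  | .conc q₁ q₂ => {p | ∃ p₁ ∈ pathsOf q₁, ∃ p₂ ∈ pathsOf q₂, p = p₁ ++ p₂}
  | .star q => {p | ∃ l : List (List σ), (∀ x ∈ l, x ∈ pathsOf q) ∧ p = l.flatten}

/-- `SConnects S p e₁ e₂`: path `p` connects schema element `e₁` to `e₂` over `S`. -/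
inductive SConnects {σ : Type} [DecidableEq σ] (S : Finset (Elem σ)) :
    List σ → Elem σ → Elem σ → Prop
  | nil (e : Elem σ) : SConnects S [] e e
  | cons {e₀ e eₜ : Elem σ} {a : σ} {p : List σ} :
      e ∈ S → a ∈ syms e₀.2 → a ∈ syms e.1 →
      SConnects S p e eₜ → SConnects S (a :: p) e₀ eₜ

/-- The edge relation of a finite graph, as a set. -/
def edgeSet {V σ : Type} (E : Finset (V × σ × V)) : Set (V × σ × V) := ↑E

/-- `e'` is one of the elements of `DNorm S` generated from `e ∈ S`. -/
def GenFrom {σ : Type} [DecidableEq σ] (S : Finset (Elem σ)) (e' e : Elem σ) :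
    Prop :=
  e ∈ S ∧ e'.1 ∈ clauses (norm e.1) ∧ e'.2 ∈ clauses (norm e.2)

lemma syms_distr {σ : Type} [DecidableEq σ] (A B : RE σ) :
    syms (distr A B) = syms A ∪ syms B := by
  induction A, B using distr.induct <;>
    simp_all [distr, syms] <;> ac_rfl

lemma syms_norm {σ : Type} [DecidableEq σ] (t : RE σ) :
    syms (norm t) = syms t := by
  induction t <;> simp_all [_root_.norm, syms, syms_distr]

lemma clauses_ne {σ : Type} (t : RE σ) : clauses t ≠ [] := by
  induction t <;> simp_all [clauses]

lemma mem_clauses_syms {σ : Type} [DecidableEq σ] {a : σ} {t : RE σ}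
    (h : a ∈ syms t) : ∃ C ∈ clauses t, a ∈ syms C := by
  induction t with
  | union t₁ t₂ ih₁ ih₂ =>
    simp only [syms, Finset.mem_union] at h
    rcases h with h | h
    · obtain ⟨C, hC, ha⟩ := ih₁ h
      exact ⟨C, by simp [clauses, hC], ha⟩
    · obtain ⟨C, hC, ha⟩ := ih₂ h
      exact ⟨C, by simp [clauses, hC], ha⟩
  | eps => simp [syms] at h
  | sym b => exact ⟨_, by simp [clauses], h⟩
  | conc t₁ t₂ ih₁ ih₂ => exact ⟨_, by simp [clauses], h⟩
  | star b => exact ⟨_, by simp [clauses], h⟩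
  | plus b => exact ⟨_, by simp [clauses], h⟩

lemma mem_dnorm {σ : Type} [DecidableEq σ] {S : Finset (Elem σ)}
    {e' e : Elem σ} (h : GenFrom S e' e) : e' ∈ DNorm S := by
  obtain ⟨hS, h1, h2⟩ := h
  simp only [DNorm, Finset.mem_biUnion, List.mem_toFinset]
  exact ⟨e, hS, by
    rcases e' with ⟨x, y⟩
    exact List.pair_mem_product.mpr ⟨h1, h2⟩⟩

lemma lift_aux {σ : Type} [DecidableEq σ] (S : Finset (Elem σ))
    {p : List σ} {e₁ e₂ : Elem σ} (h : SConnects S p e₁ e₂) :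
    e₁ ∈ S → ∀ C ∈ clauses (norm e₁.1),
      ∃ e₁' e₂' : Elem σ, e₁'.1 = C ∧ GenFrom S e₁' e₁ ∧ GenFrom S e₂' e₂ ∧
        SConnects (DNorm S) p e₁' e₂' := by
  induction h with
  | nil e =>
    intro he C hC
    obtain ⟨D, hD⟩ := List.exists_mem_of_ne_nil _ (clauses_ne (_root_.norm e.2))
    exact ⟨(C, D), (C, D), rfl, ⟨he, hC, hD⟩, ⟨he, hC, hD⟩, .nil _⟩
  | cons heS ha₀ ha hcon ih =>
    intro he₀ C hC
    rw [← syms_norm] at ha₀ ha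
    obtain ⟨D, hD, haD⟩ := mem_clauses_syms ha₀
    obtain ⟨C', hC', haC'⟩ := mem_clauses_syms ha
    obtain ⟨e₁'', e₂', h1, hg1, hg2, hcon'⟩ := ih heS C' hC'
    exact ⟨(C, D), e₂', rfl, ⟨he₀, hC, hD⟩, hg2,
      .cons (mem_dnorm hg1) haD (by rw [h1]; exact haC') hcon'⟩

/-- Schema paths lift from `S` to its double normalization `DNorm S`. -/
theorem sconnects_lift_to_dnorm {σ : Type} [DecidableEq σ]
    (S : Finset (Elem σ)) (hCF : ∀ e ∈ S, CF e.1 ∧ CF e.2)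
    (p : List σ) (e₁ e₂ : Elem σ) (h₁ : e₁ ∈ S) (h₂ : e₂ ∈ S)
    (h : SConnects S p e₁ e₂) :
    ∃ e₁' e₂' : Elem σ, GenFrom S e₁' e₁ ∧ GenFrom S e₂' e₂ ∧
      SConnects (DNorm S) p e₁' e₂' := by
  obtain ⟨C, hC⟩ := List.exists_mem_of_ne_nil _ (clauses_ne (_root_.norm e₁.1))
  obtain ⟨e₁', e₂', _, hg1, hg2, hcon⟩ := lift_aux S h h₁ C hC
  exact ⟨e₁', e₂', hg1, hg2, hcon⟩
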